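/- Let D be an oriented knot diagram with n ≥ 1 crossings, modeled by a Gauss code g, and let D' be the diagram obtained from D by a crossing change at a crossing c₀. Then X_D(t) − t · X_{D'}(t) = (1 − t) · A in ℤ[t]. -/

import Mathlib

/-! Reading the Gauss code from `e + 1` instead of `e` moves the passage at position `e` from
the front to the back of the list. So the warping degree goes up by one when `e` is an
over-passage and down by one when it is an under-passage; hence
`(1 - t) t^(d e) + t (t^(d e) - t^(d (e+1)))` vanishes at under-passages and equals
`(1 - t²) t^(d e)` at over-passages. Summing this over the arc from the under- to the
over-crossing of `c₀` telescopes. On the other side, the crossing change raises the warping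
degree by one on that arc and lowers it by one off it, which computes `t X_{D'}` in terms of
`X_D` and the over-passages on the arc. -/

open Polynomial Finset

/-- An oriented knot diagram with `n` crossings, modeled by its oriented Gauss code. -/
structure GaussCode (n : ℕ) where
  g : ZMod (2 * n) → Fin n × Bool
  o : Fin n → ZMod (2 * n)
  u : Fin n → ZMod (2 * n)
  over_iff : ∀ (c : Fin n) (e : ZMod (2 * n)), g e = (c, true) ↔ e = o c
  under_iff : ∀ (c : Fin n) (e : ZMod (2 * n)), g e = (c, false) ↔ e = u c

namespace GaussCode

variable {n : ℕ}

/-- The warping degree of the base position `e`: the number of crossings whose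
under-passage occurs strictly before its over-passage when traversing the diagram
starting at `e`. -/
def d (D : GaussCode n) (e : ZMod (2 * n)) : ℕ :=
  (Finset.univ.filter fun c : Fin n => (D.u c - e).val < (D.o c - e).val).card

/-- The warping crossing polynomial. -/
noncomputable def Xpoly (D : GaussCode n) : Polynomial ℤ :=
  ∑ c : Fin n, Polynomial.X ^ D.d (D.o c)

/-- The warping polynomial. -/
noncomputable def Wpoly (D : GaussCode n) : Polynomial ℤ :=
  ∑ k ∈ Finset.range (2 * n), Polynomial.X ^ D.d (k : ZMod (2 * n))

/-- The warping degree of the diagram: minimum over all base positions. -/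
noncomputable def wdeg (D : GaussCode n) : ℕ :=
  sInf (Set.range fun e : ZMod (2 * n) => D.d e)

/-- The diagram is alternating. -/
def Alternating (D : GaussCode n) : Prop :=
  ∀ e : ZMod (2 * n), (D.g e).2 ≠ (D.g (e + 1)).2

end GaussCode

namespace ZMod

variable {N : ℕ}

lemma sub_add_add_one (p e : ZMod N) : p - (e + 1) + 1 = p - e := by ring

variable [NeZero N]

lemma val_add_eq_or (x y : ZMod N) :
    (x + y).val = x.val + y.val ∨ (x + y).val + N = x.val + y.val := by
  rcases lt_or_ge (x.val + y.val) N with h | h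
  · exact .inl (val_add_of_lt h)
  · exact .inr (val_add_val_of_le h).symm

lemma val_sub_lt_val_sub_iff (p q e : ZMod N) :
    (p - e).val < (q - e).val ↔ 0 < (e - q).val ∧ (e - q).val ≤ (p - q).val := by
  have hpe := val_add_eq_or (p - q) (q - e)
  have hzero := val_add_eq_or (q - e) (e - q)
  rw [sub_add_sub_cancel] at hpe
  rw [sub_add_sub_cancel, sub_self, val_zero] at hzero
  have := val_lt (p - q); have := val_lt (q - e); have := val_lt (e - q); have := val_lt (p - e)
  omega

lemma sum_univ_eq_sum_range {M : Type*} [AddCommMonoid M] (f : ZMod N → M) :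
    ∑ x, f x = ∑ k ∈ range N, f k := by
  refine sum_nbij' val (fun k => k) (by simp [val_lt]) (by simp) (by simp) ?_ (by simp)
  intro k hk
  exact val_cast_of_lt (mem_range.1 hk)

lemma sum_cyclicIoc_sub {M : Type*} [AddCommGroup M] (f : ZMod N → M) (a b : ZMod N) :
    ∑ e with 0 < (e - a).val ∧ (e - a).val ≤ (b - a).val, (f e - f (e + 1))
      = f (a + 1) - f (b + 1) := by
  rw [sum_filter, ← Equiv.sum_comp (Equiv.addLeft a)]
  simp only [Equiv.coe_addLeft, add_sub_cancel_left]
  rw [sum_univ_eq_sum_range, ← sum_filter]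
  have hlt := val_lt (b - a)
  have hIco : (range N).filter (fun k : ℕ => 0 < (k : ZMod N).val ∧ (k : ZMod N).val ≤ (b - a).val)
      = Ico 1 ((b - a).val + 1) := by
    ext k
    simp only [mem_filter, mem_range, mem_Ico]
    constructor
    · rintro ⟨hk, h₀, h₁⟩
      rw [val_cast_of_lt hk] at h₀ h₁
      omega
    · rintro ⟨h₀, h₁⟩
      rw [val_cast_of_lt (by omega)]
      omega
  have hb : b + 1 = a + (((b - a).val + 1 : ℕ) : ZMod N) := by
    push_cast; rw [natCast_zmod_val]; ring
  rw [hIco]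
  calc ∑ k ∈ Ico 1 ((b - a).val + 1), (f (a + k) - f (a + k + 1))
      = -∑ k ∈ Ico 1 ((b - a).val + 1), (f (a + (k + 1 : ℕ)) - f (a + k)) := by
        rw [← sum_neg_distrib]
        refine sum_congr rfl fun k _ => ?_
        push_cast
        rw [neg_sub, add_assoc]
    _ = f (a + 1) - f (b + 1) := by
        rw [sum_Ico_sub (fun k : ℕ => f (a + k)) (by omega), neg_sub, hb, Nat.cast_one]

variable [Fact (1 < N)]

lemma val_sub_add_one_lt_iff {p q e : ZMod N} (hp : p ≠ e) (hq : q ≠ e) :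
    (p - (e + 1)).val < (q - (e + 1)).val ↔ (p - e).val < (q - e).val := by
  have hp' := val_add_eq_or (p - (e + 1)) 1
  have hq' := val_add_eq_or (q - (e + 1)) 1
  rw [sub_add_add_one, val_one] at hp' hq'
  have := val_pos.2 (sub_ne_zero.2 hp); have := val_pos.2 (sub_ne_zero.2 hq)
  have := val_lt (p - (e + 1)); have := val_lt (q - (e + 1))
  omega

lemma val_sub_add_one_lt_val_self_sub_add_one {p e : ZMod N} (hp : p ≠ e) :
    (p - (e + 1)).val < (e - (e + 1)).val := by
  have hp' := val_add_eq_or (p - (e + 1)) 1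
  have he := val_add_eq_or (e - (e + 1)) 1
  rw [sub_add_add_one, val_one] at hp' he
  rw [sub_self, val_zero] at he
  have := val_pos.2 (sub_ne_zero.2 hp); have := val_lt (p - e)
  have := val_lt (p - (e + 1)); have := val_lt (e - (e + 1))
  omega

end ZMod

namespace GaussCode

variable {n : ℕ} (D : GaussCode n)

lemma g_o (c : Fin n) : D.g (D.o c) = (c, true) := (D.over_iff c _).2 rfl

lemma g_u (c : Fin n) : D.g (D.u c) = (c, false) := (D.under_iff c _).2 rfl

lemma o_injective : Function.Injective D.o := fun c c' h => by
  simpa [h, g_o, eq_comm] using D.g_o c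

lemma u_injective : Function.Injective D.u := fun c c' h => by
  simpa [h, g_u, eq_comm] using D.g_u c

lemma o_ne_u (c c' : Fin n) : D.o c ≠ D.u c' := fun h => by
  simpa [h, g_u] using D.g_o c

lemma sum_o_eq_sum_ite [NeZero n] {M : Type*} [AddCommMonoid M] (f : ZMod (2 * n) → M) :
    ∑ c, f (D.o c) = ∑ e, if (D.g e).2 then f e else 0 := by
  rw [← sum_filter]
  refine sum_nbij' D.o (fun e => (D.g e).1) (by simp [g_o]) (by simp) (by simp [g_o]) ?_
    (fun _ _ => rfl)
  intro e he
  simp only [mem_filter, mem_univ, true_and] at he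
  exact ((D.over_iff _ e).1 (by rw [← he])).symm

variable [NeZero n]

instance : Fact (1 < 2 * n) := ⟨by have := NeZero.pos n; omega⟩

lemma d_o_add_one (c : Fin n) : D.d (D.o c + 1) = D.d (D.o c) + 1 := by
  unfold d
  have hfilter : univ.filter (fun c' => (D.u c' - (D.o c + 1)).val < (D.o c' - (D.o c + 1)).val)
      = insert c (univ.filter fun c' => (D.u c' - D.o c).val < (D.o c' - D.o c).val) := by
    ext c'
    simp only [mem_filter, mem_univ, true_and, mem_insert]
    rcases eq_or_ne c' c with rfl | hc
    · simpa using ZMod.val_sub_add_one_lt_val_self_sub_add_one (D.o_ne_u c' c').symm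
    · rw [ZMod.val_sub_add_one_lt_iff (D.o_ne_u c c').symm (D.o_injective.ne hc)]
      simp [hc]
  rw [hfilter, card_insert_of_notMem (by simp)]

lemma d_u_eq_d_u_add_one_add_one (c : Fin n) : D.d (D.u c) = D.d (D.u c + 1) + 1 := by
  unfold d
  have hfilter : univ.filter (fun c' => (D.u c' - D.u c).val < (D.o c' - D.u c).val)
      = insert c (univ.filter fun c' =>
          (D.u c' - (D.u c + 1)).val < (D.o c' - (D.u c + 1)).val) := by
    ext c'
    simp only [mem_filter, mem_univ, true_and, mem_insert]
    rcases eq_or_ne c' c with rfl | hc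
    · simpa [ZMod.val_pos, sub_eq_zero] using D.o_ne_u c' c'
    · rw [ZMod.val_sub_add_one_lt_iff (D.u_injective.ne hc) (D.o_ne_u c' c)]
      simp [hc]
  rw [hfilter, card_insert_of_notMem]
  simpa using (ZMod.val_sub_add_one_lt_val_self_sub_add_one (D.o_ne_u c c)).le

/-- The edges from the under-crossing of `c` to its over-crossing. -/
def arc (c : Fin n) : Finset (ZMod (2 * n)) :=
  univ.filter fun e => (D.o c - e).val < (D.u c - e).val

lemma mem_arc {c : Fin n} {e : ZMod (2 * n)} :
    e ∈ D.arc c ↔ (D.o c - e).val < (D.u c - e).val := by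
  simp [arc]

lemma o_mem_arc (c : Fin n) : D.o c ∈ D.arc c := by
  simpa [mem_arc, ZMod.val_pos, sub_eq_zero] using (D.o_ne_u c c).symm

lemma u_notMem_arc (c : Fin n) : D.u c ∉ D.arc c := by
  simp [mem_arc]

lemma sum_arc_sub {M : Type*} [AddCommGroup M] (c : Fin n) (f : ZMod (2 * n) → M) :
    ∑ e ∈ D.arc c, (f e - f (e + 1)) = f (D.u c + 1) - f (D.o c + 1) := by
  simp only [arc, ZMod.val_sub_lt_val_sub_iff]
  exact ZMod.sum_cyclicIoc_sub f _ _

lemma sum_ite_o_mem_arc {M : Type*} [AddCommMonoid M] (c₀ : Fin n) (f : ZMod (2 * n) → M) :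
    ∑ c, (if D.o c ∈ D.arc c₀ then f (D.o c) else 0)
      = ∑ e ∈ D.arc c₀, if (D.g e).2 then f e else 0 := by
  rw [D.sum_o_eq_sum_ite fun e => if e ∈ D.arc c₀ then f e else 0, ← sum_filter, ← sum_filter,
    ← sum_filter, filter_filter]
  congr 1
  ext e
  simp [and_comm]

section

variable {R : Type*} [CommRing R] (t : R)

lemma one_sub_mul_pow_d_add_mul_sub (e : ZMod (2 * n)) :
    (1 - t) * t ^ D.d e + t * (t ^ D.d e - t ^ D.d (e + 1))
      = (1 - t ^ 2) * if (D.g e).2 then t ^ D.d e else 0 := by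
  rcases hg : D.g e with ⟨c, _ | _⟩
  · rw [(D.under_iff c e).1 hg, d_u_eq_d_u_add_one_add_one, if_neg Bool.false_ne_true]
    ring
  · rw [(D.over_iff c e).1 hg, d_o_add_one, if_pos rfl]
    ring

lemma one_sub_mul_sum_arc (c₀ : Fin n) :
    (1 - t) * ∑ e ∈ D.arc c₀, t ^ D.d e
      = (1 - t ^ 2) * ∑ e ∈ D.arc c₀, (if (D.g e).2 then t ^ D.d e else 0)
        - t ^ D.d (D.u c₀) + t ^ 2 * t ^ D.d (D.o c₀) := by
  have hsum := sum_congr rfl fun e (_ : e ∈ D.arc c₀) => D.one_sub_mul_pow_d_add_mul_sub t e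
  rw [sum_add_distrib, ← mul_sum, ← mul_sum, ← mul_sum, sum_arc_sub, d_o_add_one] at hsum
  rw [d_u_eq_d_u_add_one_add_one]
  linear_combination hsum

end

end GaussCode

structure GaussCode.IsCrossingChange {n : ℕ} (D D' : GaussCode n) (c₀ : Fin n) : Prop where
  o_self : D'.o c₀ = D.u c₀
  u_self : D'.u c₀ = D.o c₀
  o_of_ne : ∀ c ≠ c₀, D'.o c = D.o c
  u_of_ne : ∀ c ≠ c₀, D'.u c = D.u c

namespace GaussCode.IsCrossingChange

variable {n : ℕ} {D D' : GaussCode n} {c₀ : Fin n}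

lemma of_g (h₁ : D'.g (D.o c₀) = (c₀, false)) (h₂ : D'.g (D.u c₀) = (c₀, true))
    (h₃ : ∀ e, e ≠ D.o c₀ → e ≠ D.u c₀ → D'.g e = D.g e) : IsCrossingChange D D' c₀ where
  o_self := ((D'.over_iff c₀ _).1 h₂).symm
  u_self := ((D'.under_iff c₀ _).1 h₁).symm
  o_of_ne c hc :=
    ((D'.over_iff c _).1 <| (h₃ _ (D.o_injective.ne hc) (D.o_ne_u c c₀)).trans (D.g_o c)).symm
  u_of_ne c hc :=
    ((D'.under_iff c _).1 <| (h₃ _ (D.o_ne_u c₀ c).symm (D.u_injective.ne hc)).trans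
      (D.g_u c)).symm

lemma sum_o_add {M : Type*} [AddCommMonoid M] (h : IsCrossingChange D D' c₀)
    (f : ZMod (2 * n) → M) : ∑ c, f (D'.o c) + f (D.o c₀) = ∑ c, f (D.o c) + f (D.u c₀) := by
  rw [← add_sum_erase _ _ (mem_univ c₀), ← add_sum_erase _ (fun c => f (D.o c)) (mem_univ c₀),
    h.o_self, sum_congr rfl fun c hc => by rw [h.o_of_ne c (ne_of_mem_erase hc)]]
  abel

variable [NeZero n]

lemma d_eq_of_mem (h : IsCrossingChange D D' c₀) {e : ZMod (2 * n)} (he : e ∈ D.arc c₀) :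
    D'.d e = D.d e + 1 := by
  rw [mem_arc] at he
  unfold d
  have hfilter : univ.filter (fun c => (D'.u c - e).val < (D'.o c - e).val)
      = insert c₀ (univ.filter fun c => (D.u c - e).val < (D.o c - e).val) := by
    ext c
    simp only [mem_filter, mem_univ, true_and, mem_insert]
    rcases eq_or_ne c c₀ with rfl | hc
    · simpa [h.o_self, h.u_self] using he
    · simp [h.o_of_ne c hc, h.u_of_ne c hc, hc]
  rw [hfilter, card_insert_of_notMem]
  simpa using he.le

lemma d_eq_of_notMem (h : IsCrossingChange D D' c₀) {e : ZMod (2 * n)} (he : e ∉ D.arc c₀) :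
    D.d e = D'.d e + 1 := by
  rw [mem_arc, not_lt] at he
  have hne : (D.u c₀ - e).val ≠ (D.o c₀ - e).val := fun hval =>
    D.o_ne_u c₀ c₀ (sub_left_injective (ZMod.val_injective _ hval)).symm
  unfold d
  have hfilter : univ.filter (fun c => (D.u c - e).val < (D.o c - e).val)
      = insert c₀ (univ.filter fun c => (D'.u c - e).val < (D'.o c - e).val) := by
    ext c
    simp only [mem_filter, mem_univ, true_and, mem_insert]
    rcases eq_or_ne c c₀ with rfl | hc
    · simpa using lt_of_le_of_ne he hne
    · simp [h.o_of_ne c hc, h.u_of_ne c hc, hc]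
  rw [hfilter, card_insert_of_notMem]
  simpa [h.o_self, h.u_self] using he

variable {R : Type*} [CommRing R] (t : R)

lemma mul_pow_d (h : IsCrossingChange D D' c₀) (e : ZMod (2 * n)) :
    t * t ^ D'.d e = if e ∈ D.arc c₀ then t ^ 2 * t ^ D.d e else t ^ D.d e := by
  split_ifs with he
  · rw [h.d_eq_of_mem he]
    ring
  · rw [h.d_eq_of_notMem he]
    ring

lemma mul_sum_pow_d_o (h : IsCrossingChange D D' c₀) :
    t * ∑ c, t ^ D'.d (D'.o c)
      = ∑ c, t ^ D.d (D.o c) + (t ^ 2 - 1) * ∑ e ∈ D.arc c₀, (if (D.g e).2 then t ^ D.d e else 0)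
        - t ^ 2 * t ^ D.d (D.o c₀) + t ^ D.d (D.u c₀) := by
  have hs := h.sum_o_add fun e => t * t ^ D'.d e
  rw [h.mul_pow_d t, h.mul_pow_d t, if_pos (D.o_mem_arc c₀), if_neg (D.u_notMem_arc c₀),
    sum_congr rfl fun c _ => h.mul_pow_d t (D.o c)] at hs
  have hsplit : ∑ c, (if D.o c ∈ D.arc c₀ then t ^ 2 * t ^ D.d (D.o c) else t ^ D.d (D.o c))
      = ∑ c, t ^ D.d (D.o c)
        + (t ^ 2 - 1) * ∑ c, if D.o c ∈ D.arc c₀ then t ^ D.d (D.o c) else 0 := by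
    rw [mul_sum, ← sum_add_distrib]
    refine sum_congr rfl fun c _ => ?_
    split_ifs <;> ring
  rw [D.sum_ite_o_mem_arc c₀ fun e => t ^ D.d e] at hsplit
  rw [mul_sum]
  linear_combination hs + hsplit

end GaussCode.IsCrossingChange

/-- Crossing change formula: `X_D(t) − t⬝X_{D'}(t) = (1 − t)⬝A`, where `A` is the sum of
`t^(d e)` over the edges from the under-crossing of `c₀` to the over-crossing of `c₀`. -/
theorem crossing_change_A
    (n : ℕ) (hn : 1 ≤ n) (D D' : GaussCode n) (c₀ : Fin n)
    (h1 : D'.g (D.o c₀) = (c₀, false))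
    (h2 : D'.g (D.u c₀) = (c₀, true))
    (h3 : ∀ e : ZMod (2 * n), e ≠ D.o c₀ → e ≠ D.u c₀ → D'.g e = D.g e) :
    D.Xpoly - Polynomial.X * D'.Xpoly
      = (1 - Polynomial.X) *
          ∑ k ∈ Finset.range (2 * n),
            if (D.o c₀ - (k : ZMod (2 * n))).val < (D.u c₀ - (k : ZMod (2 * n))).val
            then (Polynomial.X : Polynomial ℤ) ^ D.d (k : ZMod (2 * n)) else 0 := by
  have : NeZero n := ⟨by omega⟩
  have hA : (∑ k ∈ range (2 * n),
      if (D.o c₀ - (k : ZMod (2 * n))).val < (D.u c₀ - (k : ZMod (2 * n))).val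
      then (X : ℤ[X]) ^ D.d (k : ZMod (2 * n)) else 0) = ∑ e ∈ D.arc c₀, X ^ D.d e := by
    rw [← ZMod.sum_univ_eq_sum_range fun e =>
      if (D.o c₀ - e).val < (D.u c₀ - e).val then (X : ℤ[X]) ^ D.d e else 0, ← sum_filter]
    rfl
  have hcc : D.IsCrossingChange D' c₀ := .of_g h1 h2 h3
  rw [hA, GaussCode.Xpoly, GaussCode.Xpoly]
  linear_combination -hcc.mul_sum_pow_d_o (X : ℤ[X]) - D.one_sub_mul_sum_arc (X : ℤ[X]) c₀
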